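/- arXiv:2004.00952 — 5 statements merged into one kernel-verified Lean document; each statement's English description precedes it below -/
import Mathlib

section
/- For any nonempty recursive generalized causal team T over σ in which every element has the same function component F (i.e. T = {(s,F) : s ∈ T⁻}), and any formula φ of CO⩗[σ] or COD[σ]: T ⊨^g φ if and only if T^c ⊨^c φ, where T^c := (T⁻, F) is the associated causal team. -/
open scoped Classical
set_option linter.unusedSectionVars false

noncomputable section

/-- Assignments of values to variables. -/
abbrev Asg (V : Type) (Val : V → Type) : Type := (v : V) → Val v

/-- A recursive system of functions over the signature `(V, Val)`:
each endogenous variable `v ∈ En` has a parent set `pa v` and a function `fn v`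
computing its value from the values of its parents; recursiveness says that the
induced causal graph is acyclic. -/
structure Sys (V : Type) (Val : V → Type) : Type where
  En : Finset V
  pa : V → Finset V
  fn : (v : V) → ((w : V) → w ∈ pa v → Val w) → Val v
  recursive : ∀ x : V, ¬ Relation.TransGen (fun a b => b ∈ En ∧ a ∈ pa b) x x

variable {V : Type} [Fintype V] [DecidableEq V] [Nonempty V]
  {Val : V → Type} [∀ v, Fintype (Val v)] [∀ v, DecidableEq (Val v)] [∀ v, Nonempty (Val v)]

namespace CausalTeam

/-- The edge relation of the causal graph of a system of functions. -/
@[reducible] def Edge (F : Sys V Val) (a b : V) : Prop := b ∈ F.En ∧ a ∈ F.pa b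

theorem wfEdge (F : Sys V Val) : WellFounded (Edge F) := by
  have h2 : WellFounded (Relation.TransGen (Edge F)) := by
    have hirr : IsIrrefl V (Relation.TransGen (Edge F)) := ⟨F.recursive⟩
    have htr : IsTrans V (Relation.TransGen (Edge F)) :=
      ⟨fun _ _ _ h h' => Relation.TransGen.trans h h'⟩
    exact Finite.wellFounded_of_trans_of_irrefl _
  exact Subrelation.wf (fun h => Relation.TransGen.single h) h2

/-- An assignment is compatible with a system of functions if every endogenous
variable takes the value prescribed by its function. -/
def Compat (F : Sys V Val) (s : Asg V Val) : Prop :=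
  ∀ v ∈ F.En, s v = F.fn v (fun w _ => s w)

/-- The variables occurring in a conjunction of equations `𝐗 = 𝐱`. -/
def ikeys (I : List ((v : V) × Val v)) : List V := I.map Sigma.fst

/-- A conjunction of equations is consistent if it contains no pair `X = x`, `X = x'`
with distinct values `x ≠ x'`. -/
def IConsistent (I : List ((v : V) × Val v)) : Prop :=
  ∀ p ∈ I, ∀ q ∈ I, p.1 = q.1 → p = q

/-- Look up the (first) value assigned to a variable by a conjunction of equations. -/
def ilookup : List ((v : V) × Val v) → (v : V) → Option (Val v)
  | [], _ => none
  | p :: I, v => if h : p.1 = v then some (h ▸ p.2) else ilookup I v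

/-- The intervened system of functions `F_{𝐗=𝐱}`: the restriction of `F` to `En(F) ∖ 𝐗`. -/
def doSys (F : Sys V Val) (I : List ((v : V) × Val v)) : Sys V Val where
  En := F.En.filter (fun v => v ∉ ikeys I)
  pa := F.pa
  fn := F.fn
  recursive := by
    intro x hx
    refine F.recursive x (Relation.TransGen.mono ?_ x x hx)
    intro a b hab
    exact ⟨(Finset.mem_filter.mp hab.1).1, hab.2⟩

/-- The intervened assignment `s_{𝐗=𝐱}`: variables in `𝐗` get the prescribed values,
exogenous variables outside `𝐗` keep their values, and endogenous variables outside `𝐗`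
are recomputed (recursively) by their functions. -/
def doAsg (F : Sys V Val) (I : List ((v : V) × Val v)) (s : Asg V Val) : Asg V Val :=
  (wfEdge F).fix (C := fun v => Val v) fun v ih =>
    match ilookup I v with
    | some x => x
    | none => if h : v ∈ F.En then F.fn v (fun w hw => ih w ⟨h, hw⟩) else s v

/-- Formulas of the languages CO[σ], CO⩗[σ] and COD[σ]:
equations `X = x`, dependence atoms `=(𝐗;Y)`, negation, conjunction,
tensor disjunction `∨`, intuitionistic disjunction `⩗`, and counterfactuals `𝐗=𝐱 □→ φ`. -/
inductive Fml (V : Type) (Val : V → Type) : Type where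
  | eq : (v : V) → Val v → Fml V Val
  | dep : List V → V → Fml V Val
  | neg : Fml V Val → Fml V Val
  | and : Fml V Val → Fml V Val → Fml V Val
  | or : Fml V Val → Fml V Val → Fml V Val
  | ior : Fml V Val → Fml V Val → Fml V Val
  | cf : List ((v : V) × Val v) → Fml V Val → Fml V Val

/-- CO[σ]-formulas: equations, closed under ¬, ∧, ∨ and counterfactuals. -/
inductive IsCO : Fml V Val → Prop where
  | eq (v : V) (x : Val v) : IsCO (Fml.eq v x)
  | neg {φ} : IsCO φ → IsCO (Fml.neg φ)
  | and {φ ψ} : IsCO φ → IsCO ψ → IsCO (Fml.and φ ψ)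
  | or {φ ψ} : IsCO φ → IsCO ψ → IsCO (Fml.or φ ψ)
  | cf {φ} (I : List ((v : V) × Val v)) : IsCO φ → IsCO (Fml.cf I φ)

/-- CO⩗[σ]-formulas: additionally closed under ⩗; negation applies to CO-formulas only. -/
inductive IsCOV : Fml V Val → Prop where
  | eq (v : V) (x : Val v) : IsCOV (Fml.eq v x)
  | neg {φ} : IsCO φ → IsCOV (Fml.neg φ)
  | and {φ ψ} : IsCOV φ → IsCOV ψ → IsCOV (Fml.and φ ψ)
  | or {φ ψ} : IsCOV φ → IsCOV ψ → IsCOV (Fml.or φ ψ)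
  | ior {φ ψ} : IsCOV φ → IsCOV ψ → IsCOV (Fml.ior φ ψ)
  | cf {φ} (I : List ((v : V) × Val v)) : IsCOV φ → IsCOV (Fml.cf I φ)

/-- COD[σ]-formulas: additionally allow dependence atoms; negation applies to
CO-formulas only. -/
inductive IsCOD : Fml V Val → Prop where
  | eq (v : V) (x : Val v) : IsCOD (Fml.eq v x)
  | dep (X : List V) (Y : V) : IsCOD (Fml.dep X Y)
  | neg {φ} : IsCO φ → IsCOD (Fml.neg φ)
  | and {φ ψ} : IsCOD φ → IsCOD ψ → IsCOD (Fml.and φ ψ)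
  | or {φ ψ} : IsCOD φ → IsCOD ψ → IsCOD (Fml.or φ ψ)
  | cf {φ} (I : List ((v : V) × Val v)) : IsCOD φ → IsCOD (Fml.cf I φ)

/-- Satisfaction over causal teams `(Tm, F)` (the causal team semantics `⊨^c`). -/
def satC : Set (Asg V Val) → Sys V Val → Fml V Val → Prop
  | Tm, _, Fml.eq v x => ∀ s ∈ Tm, s v = x
  | Tm, _, Fml.dep X Y => ∀ s ∈ Tm, ∀ t ∈ Tm, (∀ w ∈ X, s w = t w) → s Y = t Y
  | Tm, F, Fml.neg φ => ∀ s ∈ Tm, ¬ satC {s} F φ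
  | Tm, F, Fml.and φ ψ => satC Tm F φ ∧ satC Tm F ψ
  | Tm, F, Fml.or φ ψ => ∃ T1 T2 : Set (Asg V Val), T1 ∪ T2 = Tm ∧ satC T1 F φ ∧ satC T2 F ψ
  | Tm, F, Fml.ior φ ψ => satC Tm F φ ∨ satC Tm F ψ
  | Tm, F, Fml.cf I φ => IConsistent I → satC (doAsg F I '' Tm) (doSys F I) φ

/-- Satisfaction over generalized causal teams (the semantics `⊨^g`). -/
def satG : Set (Asg V Val × Sys V Val) → Fml V Val → Prop
  | T, Fml.eq v x => ∀ p ∈ T, p.1 v = x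
  | T, Fml.dep X Y => ∀ p ∈ T, ∀ q ∈ T, (∀ w ∈ X, p.1 w = q.1 w) → p.1 Y = q.1 Y
  | T, Fml.neg φ => ∀ p ∈ T, ¬ satG {p} φ
  | T, Fml.and φ ψ => satG T φ ∧ satG T ψ
  | T, Fml.or φ ψ => ∃ T1 T2 : Set (Asg V Val × Sys V Val), T1 ∪ T2 = T ∧ satG T1 φ ∧ satG T2 ψ
  | T, Fml.ior φ ψ => satG T φ ∨ satG T ψ
  | T, Fml.cf I φ => IConsistent I →
      satG ((fun p : Asg V Val × Sys V Val => (doAsg p.2 I p.1, doSys p.2 I)) '' T) φ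

/-- A generalized causal team: a set of pairs `(s, F)` with `s` compatible with `F`. -/
def GTOk (T : Set (Asg V Val × Sys V Val)) : Prop := ∀ p ∈ T, Compat p.2 p.1

/-- The falsum `⊥`, an abbreviation for `X=x ∧ ¬(X=x)`. -/
def fBot : Fml V Val :=
  Fml.and (Fml.eq (Classical.arbitrary V) (Classical.arbitrary (Val (Classical.arbitrary V))))
    (Fml.neg (Fml.eq (Classical.arbitrary V) (Classical.arbitrary (Val (Classical.arbitrary V)))))

/-- A canonical tautology. -/
def fTop : Fml V Val := Fml.neg fBot

/-- Finite conjunction of a list of formulas. -/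
def bigAnd : List (Fml V Val) → Fml V Val
  | [] => fTop
  | [φ] => φ
  | φ :: ψ :: rest => Fml.and φ (bigAnd (ψ :: rest))

/-- Finite tensor disjunction of a list of formulas. -/
def bigOr : List (Fml V Val) → Fml V Val
  | [] => fBot
  | [φ] => φ
  | φ :: ψ :: rest => Fml.or φ (bigOr (ψ :: rest))

/-- Finite intuitionistic disjunction of a list of formulas. -/
def bigIor : List (Fml V Val) → Fml V Val
  | [] => fBot
  | [φ] => φ
  | φ :: ψ :: rest => Fml.ior φ (bigIor (ψ :: rest))

/-- The conjunction of equations describing the restriction of the assignment `t`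
to the set `S` of variables. -/
def eqList (S : Finset V) (t : Asg V Val) : List ((v : V) × Val v) :=
  S.toList.map (fun w => ⟨w, t w⟩)

/-- The list of all assignments over the signature. -/
def allAsg : List (Asg V Val) := (Finset.univ : Finset (Asg V Val)).toList

/-- `η(v)`: for every tuple of values for the variables other than `v`, intervening
with those values forces `v` to take the value computed by `F.fn v` from the parents. -/
def eta (F : Sys V Val) (v : V) : Fml V Val :=
  bigAnd (allAsg.map (fun t =>
    Fml.cf (eqList (Finset.univ.erase v) t) (Fml.eq v (F.fn v (fun w _ => t w)))))

/-- `ξ(v)`: the value of `v` is unaffected by interventions on all other variables. -/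
def xi (v : V) : Fml V Val :=
  bigAnd ((Finset.univ : Finset (Val v)).toList.map (fun x =>
    bigAnd (allAsg.map (fun t =>
      Fml.or (Fml.neg (Fml.eq v x))
        (Fml.cf (eqList (Finset.univ.erase v) t) (Fml.eq v x))))))

/-- `Cn(F)`: the endogenous variables of `F` governed by a constant function. -/
def Cn (F : Sys V Val) : Finset V :=
  F.En.filter (fun v => ∃ c : Val v, ∀ p, F.fn v p = c)

/-- The non-constant endogenous variables `En(F) ∖ Cn(F)`. -/
def strictEn (F : Sys V Val) : Finset V := F.En \ Cn F

/-- `F_v ∼ G_v`: equivalence of the two functions for `v` up to dummy arguments. -/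
def SimFn (F G : Sys V Val) (v : V) : Prop :=
  ∀ (x : (w : V) → w ∈ F.pa v ∩ G.pa v → Val w)
    (y : (w : V) → w ∈ F.pa v \ G.pa v → Val w)
    (z : (w : V) → w ∈ G.pa v \ F.pa v → Val w),
    F.fn v (fun w hw =>
      if h : w ∈ G.pa v then x w (Finset.mem_inter.mpr ⟨hw, h⟩)
      else y w (Finset.mem_sdiff.mpr ⟨hw, h⟩)) =
    G.fn v (fun w hw =>
      if h : w ∈ F.pa v then x w (Finset.mem_inter.mpr ⟨h, hw⟩)
      else z w (Finset.mem_sdiff.mpr ⟨hw, h⟩))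

/-- `F ∼ G`: equivalence of systems of functions up to dummy arguments. -/
def Sim (F G : Sys V Val) : Prop :=
  strictEn F = strictEn G ∧ ∀ v ∈ strictEn F, SimFn F G v

/-- The CO[σ]-formula `Φ^F` characterizing the function component `F` up to `∼`. -/
def Phi (F : Sys V Val) : Fml V Val :=
  Fml.and (bigAnd (F.En.toList.map (fun v => eta F v)))
    (bigAnd ((((Finset.univ : Finset V) \ F.En) ∪ Cn F).toList.map (fun v => xi v)))

/-- The CO[σ]-formula `Θ^A`: the team component is included in `A`. -/
def Theta (A : Finset (Asg V Val)) : Fml V Val :=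
  bigOr (A.toList.map (fun s =>
    bigAnd ((Finset.univ : Finset V).toList.map (fun v => Fml.eq v (s v)))))

/-- `χ₁`: all variables are constant in the team. -/
def chi1 : Fml V Val :=
  bigAnd ((Finset.univ : Finset V).toList.map (fun v => Fml.dep [] v))

/-- `χ_k`: the team has at most `k` elements. -/
def chi : ℕ → Fml V Val
  | 0 => fBot
  | 1 => chi1
  | (k+2) => Fml.or chi1 (chi (k+1))

end CausalTeam

open CausalTeam

/-! When every pair of `T` carries the same `F`, `T` is the product `T⁻ ×ˢ {F}`. On such
products the generalized semantics unfolds clause by clause to the causal one: the splits of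
`S ×ˢ {F}` are exactly the products of splits of `S`, and an intervention sends `S ×ˢ {F}` to
`S_{𝐗=𝐱} ×ˢ {F_{𝐗=𝐱}}`. -/

theorem Set.eq_fst_image_prod_singleton {α β : Type*} {T : Set (α × β)} {b : β}
    (h : ∀ p ∈ T, p.2 = b) : T = (Prod.fst '' T) ×ˢ {b} := by
  ext ⟨a, b'⟩
  refine ⟨fun hp => ⟨⟨_, hp, rfl⟩, h _ hp⟩, ?_⟩
  rintro ⟨⟨p, hp, rfl⟩, rfl : b' = b⟩
  simpa [← h p hp] using hp

namespace CausalTeam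

theorem image_intervene_prod_singleton (S : Set (Asg V Val)) (F : Sys V Val)
    (I : List ((v : V) × Val v)) :
    (fun p : Asg V Val × Sys V Val => (doAsg p.2 I p.1, doSys p.2 I)) '' (S ×ˢ {F}) =
      (doAsg F I '' S) ×ˢ {doSys F I} := by
  simp only [Set.prod_singleton, Set.image_image]

theorem satG_prod_singleton_iff (φ : Fml V Val) (S : Set (Asg V Val)) (F : Sys V Val) :
    satG (S ×ˢ {F}) φ ↔ satC S F φ := by
  induction φ generalizing S F with
  | eq v x => simp [satG, satC]
  | dep X Y => simp [satG, satC]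
  | neg φ ih => simp [satG, satC, ← ih, Set.singleton_prod_singleton]
  | and φ ψ ihφ ihψ => exact and_congr (ihφ S F) (ihψ S F)
  | ior φ ψ ihφ ihψ => exact or_congr (ihφ S F) (ihψ S F)
  | or φ ψ ihφ ihψ =>
    constructor
    · rintro ⟨T₁, T₂, hT, h₁, h₂⟩
      have hconst : ∀ T' ⊆ S ×ˢ {F}, ∀ p ∈ T', p.2 = F := fun T' hT' p hp => (hT' hp).2
      rw [Set.eq_fst_image_prod_singleton (hconst T₁ (hT ▸ Set.subset_union_left)),
        ihφ] at h₁
      rw [Set.eq_fst_image_prod_singleton (hconst T₂ (hT ▸ Set.subset_union_right)),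
        ihψ] at h₂
      refine ⟨_, _, ?_, h₁, h₂⟩
      rw [← Set.image_union, hT, Set.fst_image_prod _ (Set.singleton_nonempty F)]
    · rintro ⟨S₁, S₂, rfl, h₁, h₂⟩
      exact ⟨_, _, Set.union_prod.symm, (ihφ S₁ F).mpr h₁, (ihψ S₂ F).mpr h₂⟩
  | cf I φ ih =>
    simp only [satG, satC, image_intervene_prod_singleton, ih]

end CausalTeam

theorem generalized_constant_iff_causal_general {V : Type} [Fintype V] [DecidableEq V] [Nonempty V]
    {Val : V → Type} [∀ v, Fintype (Val v)] [∀ v, DecidableEq (Val v)] [∀ v, Nonempty (Val v)]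
    (φ : Fml V Val)
    (T : Set (Asg V Val × Sys V Val))
    (F : Sys V Val) (hconst : ∀ p ∈ T, p.2 = F) :
    satG T φ ↔ satC (Prod.fst '' T) F φ := by
  rw [← satG_prod_singleton_iff, ← Set.eq_fst_image_prod_singleton hconst]

/-- A nonempty recursive generalized causal team all of whose members have the same
function component `F` satisfies a CO⩗[σ]- or COD[σ]-formula iff the associated
causal team `T^c = (T⁻, F)` does. -/
theorem generalized_constant_iff_causal {V : Type} [Fintype V] [DecidableEq V] [Nonempty V]
    {Val : V → Type} [∀ v, Fintype (Val v)] [∀ v, DecidableEq (Val v)] [∀ v, Nonempty (Val v)]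
    (φ : Fml V Val) (hφ : IsCOV φ ∨ IsCOD φ)
    (T : Set (Asg V Val × Sys V Val)) (hok : GTOk T) (hne : T.Nonempty)
    (F : Sys V Val) (hconst : ∀ p ∈ T, p.2 = F) :
    satG T φ ↔ satC (Prod.fst '' T) F φ :=
  generalized_constant_iff_causal_general φ T F hconst
end
end

section
/- For any set Δ ∪ {α} of CO[σ]-formulas: Δ ⊨^g α if and only if Δ ⊨^c α, where Δ ⊨^c α (resp. Δ ⊨^g α) means that every recursive causal team (resp. recursive generalized causal team) over σ satisfying all members of Δ also satisfies α. -/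
open scoped Classical
set_option linter.unusedSectionVars false

noncomputable section

variable {V : Type} [Fintype V] [DecidableEq V] [Nonempty V]
  {Val : V → Type} [∀ v, Fintype (Val v)] [∀ v, DecidableEq (Val v)] [∀ v, Nonempty (Val v)]

open CausalTeam

/-!
Along the embedding `(T⁻, F) ↦ {(s, F) : s ∈ T⁻}` of causal teams into generalized causal teams
the two satisfaction relations agree, for every formula; this gives one direction. For the other,
CO-formulas are flat over generalized causal teams, so a generalized team satisfies a CO-formula
iff each of its members `(s, F)` does, i.e. iff the causal team `({s}, F)` does.
-/

namespace CausalTeam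

theorem satC_iff_satG_image (φ : Fml V Val) (Tm : Set (Asg V Val)) (F : Sys V Val) :
    satC Tm F φ ↔ satG ((·, F) '' Tm) φ := by
  induction φ generalizing Tm F with
  | eq v x => simp [satC, satG]
  | dep X Y => simp [satC, satG]
  | neg φ ih =>
    simp only [satC, satG, Set.forall_mem_image, ih, Set.image_singleton]
  | and φ ψ ih₁ ih₂ => simp only [satC, satG, ih₁, ih₂]
  | or φ ψ ih₁ ih₂ =>
    simp only [satC, satG, ih₁, ih₂]
    constructor
    · rintro ⟨T₁, T₂, rfl, h₁, h₂⟩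
      exact ⟨_, _, (Set.image_union _ _ _).symm, h₁, h₂⟩
    · rintro ⟨T₁, T₂, hT, h₁, h₂⟩
      have hrange : T₁ ∪ T₂ ⊆ Set.range (·, F) := hT ▸ Set.image_subset_range _ _
      refine ⟨(·, F) ⁻¹' T₁, (·, F) ⁻¹' T₂, ?_, ?_, ?_⟩
      · rw [← Set.preimage_union, hT, Set.preimage_image_eq _ (Prod.mk_left_injective F)]
      · rwa [Set.image_preimage_eq_of_subset (Set.union_subset_iff.mp hrange).1]
      · rwa [Set.image_preimage_eq_of_subset (Set.union_subset_iff.mp hrange).2]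
  | ior φ ψ ih₁ ih₂ => simp only [satC, satG, ih₁, ih₂]
  | cf I φ ih => simp only [satC, satG, ih, Set.image_image]

theorem satG_iff_forall_singleton {φ : Fml V Val} (hφ : IsCO φ)
    (T : Set (Asg V Val × Sys V Val)) : satG T φ ↔ ∀ p ∈ T, satG {p} φ := by
  induction hφ generalizing T with
  | eq v x => simp [satG]
  | neg _ => simp [satG]
  | and _ _ ih₁ ih₂ =>
    simp only [satG]
    rw [ih₁, ih₂, ← forall₂_and]
  | @or φ ψ _ _ ih₁ ih₂ =>
    have singleton_or : ∀ p, satG {p} (Fml.or φ ψ) ↔ satG {p} φ ∨ satG {p} ψ := by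
      intro p
      simp only [satG]
      constructor
      · rintro ⟨T₁, T₂, hT, h₁, h₂⟩
        rcases (hT ▸ rfl : p ∈ T₁ ∪ T₂) with hp | hp
        · exact .inl ((ih₁ _).mp h₁ p hp)
        · exact .inr ((ih₂ _).mp h₂ p hp)
      · rintro (h | h)
        · exact ⟨{p}, ∅, Set.union_empty _, h, (ih₂ ∅).mpr (by simp)⟩
        · exact ⟨∅, {p}, Set.empty_union _, (ih₁ ∅).mpr (by simp), h⟩
    simp only [singleton_or]
    rw [satG]
    constructor
    · rintro ⟨T₁, T₂, rfl, h₁, h₂⟩ p (hp | hp)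
      · exact .inl ((ih₁ _).mp h₁ p hp)
      · exact .inr ((ih₂ _).mp h₂ p hp)
    · intro h
      refine ⟨{p ∈ T | satG {p} φ}, {p ∈ T | satG {p} ψ}, ?_,
        (ih₁ _).mpr fun p hp => hp.2, (ih₂ _).mpr fun p hp => hp.2⟩
      ext p
      simp only [Set.mem_union, Set.mem_ofPred_eq, ← and_or_left]
      exact ⟨And.left, fun hp => ⟨hp, h p hp⟩⟩
  | cf I _ ih =>
    simp only [satG, Set.image_singleton]
    rw [ih, Set.forall_mem_image]
    exact ⟨fun h p hp hI => h hI hp, fun h hI p hp => h p hp hI⟩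

end CausalTeam

/-- For a set `Δ ∪ {α}` of CO[σ]-formulas, logical consequence over recursive generalized
causal teams coincides with logical consequence over recursive causal teams. -/
theorem CO_gen_consequence_iff_causal_consequence
    {V : Type} [Fintype V] [DecidableEq V] [Nonempty V]
    {Val : V → Type} [∀ v, Fintype (Val v)] [∀ v, DecidableEq (Val v)] [∀ v, Nonempty (Val v)]
    (Δ : Set (Fml V Val)) (α : Fml V Val) (hΔ : ∀ δ ∈ Δ, IsCO δ) (hα : IsCO α) :
    (∀ T : Set (Asg V Val × Sys V Val), GTOk T →
        (∀ δ ∈ Δ, satG T δ) → satG T α) ↔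
    (∀ (Tm : Set (Asg V Val)) (F : Sys V Val), (∀ s ∈ Tm, Compat F s) →
        (∀ δ ∈ Δ, satC Tm F δ) → satC Tm F α) := by
  simp only [satC_iff_satG_image]
  constructor
  · intro hgen Tm F hcompat
    exact hgen _ (Set.forall_mem_image.mpr hcompat)
  · intro hcausal T hT hΔT
    refine (satG_iff_forall_singleton hα T).mpr fun ⟨s, F⟩ hp => ?_
    have hsingleton : ((·, F) '' {s} : Set (Asg V Val × Sys V Val)) = {(s, F)} :=
      Set.image_singleton
    rw [← hsingleton]
    refine hcausal {s} F (by simpa using hT _ hp) fun δ hδ => ?_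
    rw [hsingleton]
    exact (satG_iff_forall_singleton (hΔ δ hδ) T).mp (hΔT δ hδ) _ hp
end
end

section
/- Characterization of uniformity: For any recursive generalized causal team T over σ: T ⊨^g ⩗_{F ∈ 𝔽σ} Φ^F if and only if T is uniform, where 𝔽σ is the (finite) set of all systems of functions over σ and the disjunction is the intuitionistic disjunction ⩗. -/
open scoped Classical
set_option linter.unusedSectionVars false

noncomputable section

variable {V : Type} [Fintype V] [DecidableEq V] [Nonempty V]
  {Val : V → Type} [∀ v, Fintype (Val v)] [∀ v, DecidableEq (Val v)] [∀ v, Nonempty (Val v)]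

/-!
Intervening on all variables other than `v` exposes how a pair `(s, G)` determines `v`: through
`G_v` if `v` is endogenous, as the constant `s(v)` otherwise. So `η(v)` says that every member of
the team computes `v` by `F_v`, and `ξ(v)` that `v` never responds to interventions. Consequently a
team satisfying `Φ^F` has all its function components `∼ F`. Conversely, a uniform team satisfies
`Φ^F` for `F` the non-constant part of any of its function components: its constant functions are
invisible to `ξ` because every assignment is compatible with its functions. The empty team
satisfies every formula, and a nonempty one satisfies `⩗` iff it satisfies a disjunct.
-/

namespace CausalTeam

section

variable {V : Type} {Val : V → Type}

theorem _root_.Sys.ne_of_mem_pa (G : Sys V Val) {v w : V} (hv : v ∈ G.En) (hw : w ∈ G.pa v) :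
    w ≠ v := by
  rintro rfl
  exact G.recursive w (.single ⟨hv, hw⟩)

theorem iconsistent_eqList (S : Finset V) (t : Asg V Val) : IConsistent (eqList S t) := by
  simp only [IConsistent, eqList, List.mem_map]
  rintro _ ⟨a, -, rfl⟩ _ ⟨b, -, rfl⟩ (rfl : a = b)
  rfl

variable [DecidableEq V]

theorem ilookup_eqList (S : Finset V) (t : Asg V Val) (v : V) :
    ilookup (eqList S t) v = if v ∈ S then some (t v) else none := by
  simp only [eqList, ← Finset.mem_toList]
  generalize S.toList = l
  induction l with
  | nil => simp [ilookup]
  | cons a l ih =>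
    by_cases h : a = v
    · subst h
      simp [ilookup]
    · simp [ilookup, h, ih, Ne.symm h]

variable [∀ v, Nonempty (Val v)]

theorem exists_asg_restrict_eq (S : Finset V) (x : (w : V) → w ∈ S → Val w) :
    ∃ t : Asg V Val, (fun w _ => t w) = x :=
  ⟨fun w => if h : w ∈ S then x w h else Classical.arbitrary _, by funext w hw; simp [hw]⟩

theorem simFn_iff {F G : Sys V Val} {v : V} :
    SimFn F G v ↔ ∀ t : Asg V Val, F.fn v (fun w _ => t w) = G.fn v (fun w _ => t w) := by
  refine ⟨fun h t => by simpa using h (fun w _ => t w) (fun w _ => t w) (fun w _ => t w),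
    fun h x y z => ?_⟩
  let t : Asg V Val := fun w =>
    if h₁ : w ∈ F.pa v ∩ G.pa v then x w h₁
    else if h₂ : w ∈ F.pa v \ G.pa v then y w h₂
    else if h₃ : w ∈ G.pa v \ F.pa v then z w h₃
    else Classical.arbitrary _
  convert h t using 2 <;> funext w hw <;> split_ifs <;> simp_all [t]

variable [Fintype V] [∀ v, Fintype (Val v)] [∀ v, DecidableEq (Val v)]

theorem mem_Cn_iff {F : Sys V Val} {v : V} :
    v ∈ Cn F ↔ v ∈ F.En ∧ ∃ c, ∀ t : Asg V Val, F.fn v (fun w _ => t w) = c := by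
  simp only [Cn, Finset.mem_filter]
  refine and_congr_right fun _ => exists_congr fun c => ⟨fun h t => h _, fun h x => ?_⟩
  obtain ⟨t, rfl⟩ := exists_asg_restrict_eq (F.pa v) x
  exact h t

theorem notMem_strictEn_of_forall_eq {F : Sys V Val} {v : V} {c : Val v}
    (h : ∀ t : Asg V Val, F.fn v (fun w _ => t w) = c) : v ∉ strictEn F := fun hv =>
  (Finset.mem_sdiff.1 hv).2 (mem_Cn_iff.2 ⟨(Finset.mem_sdiff.1 hv).1, c, h⟩)

theorem mem_strictEn_of_forall_eq {F G : Sys V Val} {v : V} (hF : v ∈ strictEn F)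
    (hG : v ∈ G.En) (h : ∀ t : Asg V Val, G.fn v (fun w _ => t w) = F.fn v (fun w _ => t w)) :
    v ∈ strictEn G := by
  refine Finset.mem_sdiff.2 ⟨hG, fun hc => ?_⟩
  obtain ⟨-, c, hc⟩ := mem_Cn_iff.1 hc
  exact notMem_strictEn_of_forall_eq (fun t => (h t).symm.trans (hc t)) hF

theorem sim_iff {F G : Sys V Val} :
    Sim F G ↔ strictEn F = strictEn G ∧
      ∀ v ∈ strictEn F, ∀ t : Asg V Val, F.fn v (fun w _ => t w) = G.fn v (fun w _ => t w) := by
  simp only [Sim, simFn_iff]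

theorem Sim.symm {F G : Sys V Val} (h : Sim F G) : Sim G F := by
  obtain ⟨hEn, hfn⟩ := sim_iff.1 h
  exact sim_iff.2 ⟨hEn.symm, fun v hv t => (hfn v (hEn ▸ hv) t).symm⟩

theorem Sim.trans {F G H : Sys V Val} (h₁ : Sim F G) (h₂ : Sim G H) : Sim F H := by
  obtain ⟨hEn₁, hfn₁⟩ := sim_iff.1 h₁
  obtain ⟨hEn₂, hfn₂⟩ := sim_iff.1 h₂
  exact sim_iff.2 ⟨hEn₁.trans hEn₂, fun v hv t => (hfn₁ v hv t).trans (hfn₂ v (hEn₁ ▸ hv) t)⟩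

def strictPart (F : Sys V Val) : Sys V Val where
  En := strictEn F
  pa := F.pa
  fn := F.fn
  recursive x hx :=
    F.recursive x (Relation.TransGen.mono (fun _ _ h => ⟨(Finset.mem_sdiff.1 h.1).1, h.2⟩) _ _ hx)

theorem Cn_strictPart (F : Sys V Val) : Cn (strictPart F) = ∅ := by
  refine Finset.eq_empty_of_forall_notMem fun v hv => ?_
  obtain ⟨hvF, c, hc⟩ := mem_Cn_iff.1 hv
  exact notMem_strictEn_of_forall_eq (F := F) hc hvF

theorem sim_strictPart (F : Sys V Val) : Sim (strictPart F) F := by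
  have hEn : strictEn (strictPart F) = strictEn F := by
    rw [strictEn, Cn_strictPart, Finset.sdiff_empty]
    rfl
  exact sim_iff.2 ⟨hEn, fun _ _ _ => rfl⟩

variable [Nonempty V]

theorem satG_empty (φ : Fml V Val) : satG ∅ φ := by
  induction φ with
  | eq | dep | neg => simp [satG]
  | and φ ψ ihφ ihψ => exact ⟨ihφ, ihψ⟩
  | or φ ψ ihφ ihψ => exact ⟨∅, ∅, Set.empty_union ∅, ihφ, ihψ⟩
  | ior φ ψ ihφ _ => exact Or.inl ihφ
  | cf I φ ih => exact fun _ => by rwa [Set.image_empty]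

theorem not_satG_fBot {T : Set (Asg V Val × Sys V Val)} (hT : T.Nonempty) :
    ¬ satG T (fBot : Fml V Val) := by
  obtain ⟨p, hp⟩ := hT
  rintro ⟨hEq, hNeg⟩
  exact hNeg p hp fun q hq => (Set.mem_singleton_iff.1 hq) ▸ hEq p hp

theorem satG_bigAnd {T : Set (Asg V Val × Sys V Val)} :
    ∀ l : List (Fml V Val), satG T (bigAnd l) ↔ ∀ φ ∈ l, satG T φ
  | [] => iff_of_true (fun p _ => not_satG_fBot (Set.singleton_nonempty p)) (List.forall_mem_nil _)
  | [φ] => by simp [bigAnd]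
  | φ :: ψ :: l => by simp only [bigAnd, satG, satG_bigAnd (ψ :: l), List.forall_mem_cons]

theorem satG_bigIor_iff {T : Set (Asg V Val × Sys V Val)} (hT : T.Nonempty) :
    ∀ l : List (Fml V Val), satG T (bigIor l) ↔ ∃ φ ∈ l, satG T φ
  | [] => by simpa [bigIor] using not_satG_fBot hT
  | [φ] => by simp [bigIor]
  | φ :: ψ :: l => by simp [bigIor, satG, satG_bigIor_iff hT (ψ :: l)]

theorem doAsg_apply (F : Sys V Val) (I : List ((v : V) × Val v)) (s : Asg V Val) (v : V) :
    doAsg F I s v = match ilookup I v with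
      | some x => x
      | none => if v ∈ F.En then F.fn v (fun w _ => doAsg F I s w) else s v := by
  rw [doAsg, WellFounded.fix_eq]
  rfl

def interventionValue (G : Sys V Val) (s t : Asg V Val) (v : V) : Val v :=
  if v ∈ G.En then G.fn v (fun w _ => t w) else s v

theorem doAsg_eqList_erase_of_ne (G : Sys V Val) (s t : Asg V Val) {v w : V} (hw : w ≠ v) :
    doAsg G (eqList (Finset.univ.erase v) t) s w = t w := by
  rw [doAsg_apply, ilookup_eqList, if_pos (by simpa using hw)]

theorem doAsg_eqList_erase_self (G : Sys V Val) (s t : Asg V Val) (v : V) :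
    doAsg G (eqList (Finset.univ.erase v) t) s v = interventionValue G s t v := by
  rw [doAsg_apply, ilookup_eqList, if_neg (by simp), interventionValue]
  dsimp only
  split_ifs with hv
  · congr 1
    funext w hw
    exact doAsg_eqList_erase_of_ne G s t (G.ne_of_mem_pa hv hw)
  · rfl

theorem interventionValue_of_mem {G : Sys V Val} {s t : Asg V Val} {v : V} (hv : v ∈ G.En) :
    interventionValue G s t v = G.fn v (fun w _ => t w) :=
  if_pos hv

theorem interventionValue_of_notMem {G : Sys V Val} {s t : Asg V Val} {v : V} (hv : v ∉ G.En) :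
    interventionValue G s t v = s v :=
  if_neg hv

theorem interventionValue_of_notMem_strictEn {G : Sys V Val} {s t : Asg V Val} {v : V}
    (hs : Compat G s) (hv : v ∉ strictEn G) : interventionValue G s t v = s v := by
  by_cases hvG : v ∈ G.En
  · obtain ⟨-, c, hc⟩ := mem_Cn_iff.1 (by simpa [strictEn, hvG] using hv : v ∈ Cn G)
    rw [interventionValue_of_mem hvG, hc, hs v hvG, hc]
  · exact interventionValue_of_notMem hvG

theorem satG_cf_eqList_erase_eq_iff {T : Set (Asg V Val × Sys V Val)} {v : V} {t : Asg V Val}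
    {x : Val v} :
    satG T (Fml.cf (eqList (Finset.univ.erase v) t) (Fml.eq v x)) ↔
      ∀ p ∈ T, interventionValue p.2 p.1 t v = x := by
  simp only [satG, iconsistent_eqList, true_implies, Set.forall_mem_image,
    doAsg_eqList_erase_self]

theorem satG_or_neg_eq_iff {T : Set (Asg V Val × Sys V Val)} {v : V} {x : Val v} {ψ : Fml V Val}
    {P : Asg V Val × Sys V Val → Prop} (hψ : ∀ T, satG T ψ ↔ ∀ p ∈ T, P p) :
    satG T (Fml.or (Fml.neg (Fml.eq v x)) ψ) ↔ ∀ p ∈ T, p.1 v = x → P p := by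
  simp only [satG, hψ, Set.mem_singleton_iff, forall_eq]
  constructor
  · rintro ⟨T₁, T₂, rfl, h₁, h₂⟩ p (hp | hp) hpx
    · exact absurd hpx (h₁ p hp)
    · exact h₂ p hp
  · intro h
    refine ⟨{p ∈ T | p.1 v ≠ x}, {p ∈ T | p.1 v = x}, ?_, fun p hp => hp.2,
      fun p hp => h p hp.1 hp.2⟩
    ext p
    by_cases p.1 v = x <;> simp [*]

theorem satG_eta_iff {T : Set (Asg V Val × Sys V Val)} {F : Sys V Val} {v : V} :
    satG T (eta F v) ↔
      ∀ p ∈ T, ∀ t : Asg V Val, interventionValue p.2 p.1 t v = F.fn v (fun w _ => t w) := by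
  simp only [eta, satG_bigAnd, List.forall_mem_map, satG_cf_eqList_erase_eq_iff, allAsg,
    Finset.mem_toList, Finset.mem_univ, true_implies]
  exact ⟨fun h p hp t => h t p hp, fun h t p hp => h p hp t⟩

theorem satG_xi_iff {T : Set (Asg V Val × Sys V Val)} {v : V} :
    satG T (xi v) ↔ ∀ p ∈ T, ∀ t : Asg V Val, interventionValue p.2 p.1 t v = p.1 v := by
  simp only [xi, satG_bigAnd, List.forall_mem_map,
    satG_or_neg_eq_iff fun _ => satG_cf_eqList_erase_eq_iff, allAsg, Finset.mem_toList,
    Finset.mem_univ, true_implies]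
  exact ⟨fun h p hp t => h _ t p hp rfl, fun h _ t p hp hpx => hpx ▸ h p hp t⟩

theorem satG_Phi_iff {T : Set (Asg V Val × Sys V Val)} {F : Sys V Val} :
    satG T (Phi F) ↔
      (∀ v ∈ F.En, ∀ p ∈ T, ∀ t : Asg V Val,
        interventionValue p.2 p.1 t v = F.fn v (fun w _ => t w)) ∧
      (∀ v ∉ strictEn F, ∀ p ∈ T, ∀ t : Asg V Val, interventionValue p.2 p.1 t v = p.1 v) := by
  have hξ : ∀ v, v ∈ (Finset.univ \ F.En) ∪ Cn F ↔ v ∉ strictEn F := by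
    intro v
    simp only [strictEn, Cn, Finset.mem_union, Finset.mem_sdiff, Finset.mem_filter,
      Finset.mem_univ, true_and]
    tauto
  simp only [Phi, satG, satG_bigAnd, List.forall_mem_map, Finset.mem_toList, satG_eta_iff,
    satG_xi_iff, hξ]

theorem sim_of_satG_Phi {T : Set (Asg V Val × Sys V Val)} {F : Sys V Val}
    (hT : satG T (Phi F)) {p : Asg V Val × Sys V Val} (hp : p ∈ T) : Sim F p.2 := by
  obtain ⟨hη, hξ⟩ := satG_Phi_iff.1 hT
  have hagree : ∀ v ∈ strictEn F, v ∈ p.2.En ∧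
      ∀ t : Asg V Val, F.fn v (fun w _ => t w) = p.2.fn v (fun w _ => t w) := by
    intro v hv
    have hvF : v ∈ F.En := (Finset.mem_sdiff.1 hv).1
    have hvp : v ∈ p.2.En := by
      by_contra hvp
      refine notMem_strictEn_of_forall_eq (c := p.1 v) (fun t => ?_) hv
      rw [← hη v hvF p hp t, interventionValue_of_notMem hvp]
    exact ⟨hvp, fun t => by rw [← hη v hvF p hp t, interventionValue_of_mem hvp]⟩
  refine sim_iff.2 ⟨Finset.ext fun v => ⟨fun hv => ?_, fun hv => ?_⟩, fun v hv => (hagree v hv).2⟩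
  · exact mem_strictEn_of_forall_eq hv (hagree v hv).1 fun t => ((hagree v hv).2 t).symm
  · by_contra hvF
    refine notMem_strictEn_of_forall_eq (c := p.1 v) (fun t => ?_) hv
    rw [← hξ v hvF p hp t, interventionValue_of_mem (Finset.mem_sdiff.1 hv).1]

theorem satG_Phi_of_forall_sim {T : Set (Asg V Val × Sys V Val)} (hok : GTOk T) {F : Sys V Val}
    (hF : Cn F = ∅) (hT : ∀ p ∈ T, Sim F p.2) : satG T (Phi F) := by
  refine satG_Phi_iff.2 ⟨fun v hv p hp t => ?_, fun v hv p hp t => ?_⟩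
  · obtain ⟨hEn, hfn⟩ := sim_iff.1 (hT p hp)
    have hvF : v ∈ strictEn F := by simpa [strictEn, hF] using hv
    rw [interventionValue_of_mem (Finset.mem_sdiff.1 (hEn ▸ hvF)).1, hfn v hvF t]
  · exact interventionValue_of_notMem_strictEn (hok p hp) ((sim_iff.1 (hT p hp)).1 ▸ hv)

end

end CausalTeam

open CausalTeam

/-- **Characterization of uniformity**: a recursive generalized causal team satisfies the
intuitionistic disjunction of the formulas `Φ^F`, `F` ranging over all systems of
functions over the signature, iff it is uniform. -/
theorem uniformity_characterization {V : Type} [Fintype V] [DecidableEq V] [Nonempty V]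
    {Val : V → Type} [∀ v, Fintype (Val v)] [∀ v, DecidableEq (Val v)] [∀ v, Nonempty (Val v)]
    (T : Set (Asg V Val × Sys V Val)) (hok : GTOk T)
    (L : List (Sys V Val)) (hL : ∀ F : Sys V Val, F ∈ L) :
    satG T (bigIor (L.map Phi)) ↔ ∀ p ∈ T, ∀ q ∈ T, Sim p.2 q.2 := by
  rcases T.eq_empty_or_nonempty with rfl | ⟨p₀, hp₀⟩
  · exact iff_of_true (satG_empty _) (by simp)
  rw [satG_bigIor_iff ⟨p₀, hp₀⟩]
  simp only [List.mem_map, exists_exists_and_eq_and]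
  constructor
  · rintro ⟨F, -, hF⟩ p hp q hq
    exact (sim_of_satG_Phi hF hp).symm.trans (sim_of_satG_Phi hF hq)
  · intro hU
    refine ⟨strictPart p₀.2, hL _, satG_Phi_of_forall_sim hok (Cn_strictPart _) fun p hp => ?_⟩
    exact (sim_strictPart p₀.2).trans (hU p₀ hp₀ p hp)
end
end

section
/- Disjunction property over generalized causal teams: Let Δ be a set of CO[σ]-formulas and φ, ψ be formulas of CO⩗[σ] (or COD[σ]). If Δ ⊨^g φ ⩗ ψ, then Δ ⊨^g φ or Δ ⊨^g ψ. In particular, if ⊨^g φ ⩗ ψ then ⊨^g φ or ⊨^g ψ. -/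
open scoped Classical
set_option linter.unusedSectionVars false

noncomputable section

variable {V : Type} [Fintype V] [DecidableEq V] [Nonempty V]
  {Val : V → Type} [∀ v, Fintype (Val v)] [∀ v, DecidableEq (Val v)] [∀ v, Nonempty (Val v)]

open CausalTeam

/-! Every formula is downward closed and every CO-formula is closed under unions of teams.
So if `T₁ ⊨ Δ` with `T₁ ⊭ φ` and `T₂ ⊨ Δ` with `T₂ ⊭ ψ`, then `T₁ ∪ T₂ ⊨ Δ`, hence
`T₁ ∪ T₂ ⊨ φ ⩗ ψ`, and downward closure gives `T₁ ⊨ φ` or `T₂ ⊨ ψ`, a contradiction. -/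

namespace CausalTeam

theorem GTOk.union {T₁ T₂ : Set (Asg V Val × Sys V Val)} (h₁ : GTOk T₁) (h₂ : GTOk T₂) :
    GTOk (T₁ ∪ T₂) := by
  rintro p (hp | hp)
  exacts [h₁ p hp, h₂ p hp]

theorem satG_of_subset (α : Fml V Val) {T T' : Set (Asg V Val × Sys V Val)} (hsub : T ⊆ T')
    (h : satG T' α) : satG T α := by
  induction α generalizing T T' with
  | eq v x => exact fun p hp => h p (hsub hp)
  | dep X Y => exact fun p hp q hq => h p (hsub hp) q (hsub hq)
  | neg φ _ => exact fun p hp => h p (hsub hp)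
  | and φ ψ ihφ ihψ => exact ⟨ihφ hsub h.1, ihψ hsub h.2⟩
  | or φ ψ ihφ ihψ =>
    obtain ⟨A, B, hAB, hA, hB⟩ := h
    refine ⟨A ∩ T, B ∩ T, ?_, ihφ Set.inter_subset_left hA, ihψ Set.inter_subset_left hB⟩
    rw [← Set.union_inter_distrib_right, hAB, Set.inter_eq_self_of_subset_right hsub]
  | ior φ ψ ihφ ihψ => exact h.imp (ihφ hsub) (ihψ hsub)
  | cf I φ ih => exact fun hI => ih (Set.image_mono hsub) (h hI)

theorem satG_union_of_isCO {α : Fml V Val} (hα : IsCO α) {T₁ T₂ : Set (Asg V Val × Sys V Val)}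
    (h₁ : satG T₁ α) (h₂ : satG T₂ α) : satG (T₁ ∪ T₂) α := by
  induction hα generalizing T₁ T₂ with
  | eq v x | neg _ _ =>
    rintro p (hp | hp)
    exacts [h₁ p hp, h₂ p hp]
  | and _ _ ihφ ihψ => exact ⟨ihφ h₁.1 h₂.1, ihψ h₁.2 h₂.2⟩
  | or _ _ ihφ ihψ =>
    obtain ⟨A, B, rfl, hA, hB⟩ := h₁
    obtain ⟨A', B', rfl, hA', hB'⟩ := h₂
    exact ⟨A ∪ A', B ∪ B', Set.union_union_union_comm A A' B B', ihφ hA hA', ihψ hB hB'⟩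
  | cf I _ ih =>
    intro hI
    rw [Set.image_union]
    exact ih (h₁ hI) (h₂ hI)

end CausalTeam

theorem disjunction_property_general {V : Type} [Fintype V] [DecidableEq V] [Nonempty V]
    {Val : V → Type} [∀ v, Fintype (Val v)] [∀ v, DecidableEq (Val v)] [∀ v, Nonempty (Val v)]
    (Δ : Set (Fml V Val)) (hΔ : ∀ δ ∈ Δ, IsCO δ)
    (φ ψ : Fml V Val)
    (h : ∀ T : Set (Asg V Val × Sys V Val), GTOk T →
        (∀ δ ∈ Δ, satG T δ) → satG T (Fml.ior φ ψ)) :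
    (∀ T : Set (Asg V Val × Sys V Val), GTOk T → (∀ δ ∈ Δ, satG T δ) → satG T φ) ∨
    (∀ T : Set (Asg V Val × Sys V Val), GTOk T → (∀ δ ∈ Δ, satG T δ) → satG T ψ) := by
  by_contra! ⟨⟨T₁, h₁ok, h₁Δ, h₁φ⟩, ⟨T₂, h₂ok, h₂Δ, h₂ψ⟩⟩
  have hΔ₁₂ : ∀ δ ∈ Δ, satG (T₁ ∪ T₂) δ := fun δ hδ =>
    satG_union_of_isCO (hΔ δ hδ) (h₁Δ δ hδ) (h₂Δ δ hδ)
  rcases h (T₁ ∪ T₂) (h₁ok.union h₂ok) hΔ₁₂ with hφ | hψ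
  · exact h₁φ (satG_of_subset φ Set.subset_union_left hφ)
  · exact h₂ψ (satG_of_subset ψ Set.subset_union_right hψ)

/-- **Disjunction property over generalized causal teams**: if a set `Δ` of
CO[σ]-formulas entails `φ ⩗ ψ` over recursive generalized causal teams, then it
entails `φ` or it entails `ψ`. -/
theorem disjunction_property {V : Type} [Fintype V] [DecidableEq V] [Nonempty V]
    {Val : V → Type} [∀ v, Fintype (Val v)] [∀ v, DecidableEq (Val v)] [∀ v, Nonempty (Val v)]
    (Δ : Set (Fml V Val)) (hΔ : ∀ δ ∈ Δ, IsCO δ)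
    (φ ψ : Fml V Val) (hφ : IsCOV φ ∨ IsCOD φ) (hψ : IsCOV ψ ∨ IsCOD ψ)
    (h : ∀ T : Set (Asg V Val × Sys V Val), GTOk T →
        (∀ δ ∈ Δ, satG T δ) → satG T (Fml.ior φ ψ)) :
    (∀ T : Set (Asg V Val × Sys V Val), GTOk T → (∀ δ ∈ Δ, satG T δ) → satG T φ) ∨
    (∀ T : Set (Asg V Val × Sys V Val), GTOk T → (∀ δ ∈ Δ, satG T δ) → satG T ψ) :=
  disjunction_property_general Δ hΔ φ ψ h
end
end

section
/- Resolution normal form: For every CO⩗[σ]-formula φ, φ and ⩗R(φ) (the intuitionistic disjunction of the finite set R(φ) of resolutions of φ) are interderivable in the natural deduction system for CO⩗[σ]: φ ⊢ ⩗R(φ) and ⩗R(φ) ⊢ φ. -/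
open scoped Classical
set_option linter.unusedSectionVars false

noncomputable section

variable {V : Type} [Fintype V] [DecidableEq V] [Nonempty V]
  {Val : V → Type} [∀ v, Fintype (Val v)] [∀ v, DecidableEq (Val v)] [∀ v, Nonempty (Val v)]

namespace CausalTeam

/-- Counterfactual-free formulas. -/
inductive CfFree : Fml V Val → Prop where
  | eq (v : V) (x : Val v) : CfFree (Fml.eq v x)
  | dep (X : List V) (Y : V) : CfFree (Fml.dep X Y)
  | neg {φ} : CfFree φ → CfFree (Fml.neg φ)
  | and {φ ψ} : CfFree φ → CfFree ψ → CfFree (Fml.and φ ψ)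
  | or {φ ψ} : CfFree φ → CfFree ψ → CfFree (Fml.or φ ψ)
  | ior {φ ψ} : CfFree φ → CfFree ψ → CfFree (Fml.ior φ ψ)

/-- The formula `X ⇝ Y` ("X causally affects Y"). -/
def leads (X Y : V) : Fml V Val :=
  bigOr (((Finset.univ : Finset (Finset V)).toList.filter (fun Z => X ∉ Z ∧ Y ∉ Z)).flatMap
    (fun Z => allAsg.flatMap (fun t =>
      (Finset.univ : Finset (Val X)).toList.flatMap (fun x =>
        (Finset.univ : Finset (Val X)).toList.flatMap (fun x' =>
          (Finset.univ : Finset (Val Y)).toList.flatMap (fun y =>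
            (Finset.univ : Finset (Val Y)).toList.filterMap (fun y' =>
              if x ≠ x' ∧ y ≠ y' then
                some (Fml.cf (eqList Z t)
                  (Fml.and (Fml.cf [⟨X, x⟩] (Fml.eq Y y))
                    (Fml.cf [⟨X, x'⟩] (Fml.eq Y y'))))
              else none)))))))

/-- The set of resolutions `R(φ)` of a CO⩗[σ]-formula. -/
def Res : Fml V Val → List (Fml V Val)
  | Fml.eq v x => [Fml.eq v x]
  | Fml.dep X Y => [Fml.dep X Y]
  | Fml.neg φ => [Fml.neg φ]
  | Fml.and φ ψ => (Res φ).flatMap (fun a => (Res ψ).map (fun b => Fml.and a b))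
  | Fml.or φ ψ => (Res φ).flatMap (fun a => (Res ψ).map (fun b => Fml.or a b))
  | Fml.ior φ ψ => Res φ ++ Res ψ
  | Fml.cf I φ => (Res φ).map (fun a => Fml.cf I a)

/-- The natural deduction system for CO⩗[σ]: `Deriv Γ φ` means `Γ ⊢ φ`. -/
inductive Deriv : Set (Fml V Val) → Fml V Val → Prop where
  | hyp {Γ} {φ} : φ ∈ Γ → Deriv Γ φ
  | valDef {Γ} (X : V) :
      Deriv Γ (bigOr ((Finset.univ : Finset (Val X)).toList.map (fun x => Fml.eq X x)))
  | valUnq {Γ} {X : V} {x x' : Val X} :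
      Deriv Γ (Fml.eq X x) → x ≠ x' → Deriv Γ (Fml.neg (Fml.eq X x'))
  | andI {Γ} {φ ψ} : Deriv Γ φ → Deriv Γ ψ → Deriv Γ (Fml.and φ ψ)
  | andE1 {Γ} {φ ψ} : Deriv Γ (Fml.and φ ψ) → Deriv Γ φ
  | andE2 {Γ} {φ ψ} : Deriv Γ (Fml.and φ ψ) → Deriv Γ ψ
  | orI1 {Γ} {φ ψ} : Deriv Γ φ → Deriv Γ (Fml.or φ ψ)
  | orI2 {Γ} {φ ψ} : Deriv Γ φ → Deriv Γ (Fml.or ψ φ)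
  | orE {Γ} {φ ψ α} : IsCO α → Deriv Γ (Fml.or φ ψ) →
      Deriv (insert φ Γ) α → Deriv (insert ψ Γ) α → Deriv Γ α
  | negI {Γ} {α} : IsCO α → Deriv (insert α Γ) fBot → Deriv Γ (Fml.neg α)
  | negE {Γ} {α φ} : Deriv Γ α → Deriv Γ (Fml.neg α) → Deriv Γ φ
  | raa {Γ} {α} : IsCO α → Deriv (insert (Fml.neg α) Γ) fBot → Deriv Γ α
  | cfEff {Γ} (I : List ((v : V) × Val v)) (Y : V) (y : Val Y) :
      Deriv Γ (Fml.cf (I ++ [⟨Y, y⟩]) (Fml.eq Y y))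
  | cfCmp {Γ} {γ} {I : List ((v : V) × Val v)} {W : V} {w : Val W} : CfFree γ →
      Deriv Γ (Fml.cf I (Fml.eq W w)) → Deriv Γ (Fml.cf I γ) →
      Deriv Γ (Fml.cf (I ++ [⟨W, w⟩]) γ)
  | cfBotE {Γ} {I} {φ} : Deriv Γ (Fml.cf I fBot) → Deriv Γ φ
  | botCfE {Γ} {φ} (I : List ((v : V) × Val v)) {X : V} {x x' : Val X} : x ≠ x' →
      Deriv Γ (Fml.cf (I ++ [⟨X, x⟩, ⟨X, x'⟩]) φ)
  | cfCtr {Γ} {φ} {X : V} {x : Val X} {I} :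
      Deriv Γ (Fml.cf (⟨X, x⟩ :: ⟨X, x⟩ :: I) φ) → Deriv Γ (Fml.cf (⟨X, x⟩ :: I) φ)
  | cfWk {Γ} {φ} {X : V} {x : Val X} {I} :
      Deriv Γ (Fml.cf (⟨X, x⟩ :: I) φ) → Deriv Γ (Fml.cf (⟨X, x⟩ :: ⟨X, x⟩ :: I) φ)
  | cfSub {Γ} {φ ψ} {I} : Deriv Γ (Fml.cf I φ) →
      Deriv ({φ} : Set (Fml V Val)) ψ → Deriv Γ (Fml.cf I ψ)
  | cfAndI {Γ} {φ ψ} {I} : Deriv Γ (Fml.cf I φ) → Deriv Γ (Fml.cf I ψ) →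
      Deriv Γ (Fml.cf I (Fml.and φ ψ))
  | cfOrDst1 {Γ} {φ ψ} {I} : Deriv Γ (Fml.cf I (Fml.or φ ψ)) →
      Deriv Γ (Fml.or (Fml.cf I φ) (Fml.cf I ψ))
  | cfOrDst2 {Γ} {φ ψ} {I} : Deriv Γ (Fml.or (Fml.cf I φ) (Fml.cf I ψ)) →
      Deriv Γ (Fml.cf I (Fml.or φ ψ))
  | cfExtr {Γ} {φ} {I J : List ((v : V) × Val v)} : IConsistent I →
      Deriv Γ (Fml.cf I (Fml.cf J φ)) →
      Deriv Γ (Fml.cf ((I.filter (fun p => p.1 ∉ ikeys J)) ++ J) φ)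
  | cfExp {Γ} {φ} {I J : List ((v : V) × Val v)} : (∀ p ∈ I, ∀ q ∈ J, p.1 ≠ q.1) →
      Deriv Γ (Fml.cf (I ++ J) φ) → Deriv Γ (Fml.cf I (Fml.cf J φ))
  | negCfE {Γ} {α} {I} : Deriv Γ (Fml.neg (Fml.cf I α)) → Deriv Γ (Fml.cf I (Fml.neg α))
  | recur {Γ} (Xs : List V) (X Y : V) : Xs.Nodup → Xs.head? = some X →
      Xs.getLast? = some Y →
      (∀ i : ℕ, ∀ hi : i + 1 < Xs.length,
        Deriv Γ (leads (Xs.get ⟨i, Nat.lt_of_succ_lt hi⟩) (Xs.get ⟨i + 1, hi⟩))) →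
      Deriv Γ (Fml.neg (leads Y X))
  | orCom {Γ} {φ ψ} : Deriv Γ (Fml.or φ ψ) → Deriv Γ (Fml.or ψ φ)
  | orAss {Γ} {φ ψ χ} : Deriv Γ (Fml.or (Fml.or φ ψ) χ) →
      Deriv Γ (Fml.or φ (Fml.or ψ χ))
  | orSub {Γ} {φ ψ χ} : Deriv Γ (Fml.or φ ψ) →
      Deriv ({φ} : Set (Fml V Val)) χ → Deriv Γ (Fml.or χ ψ)
  | iorI1 {Γ} {φ ψ} : Deriv Γ φ → Deriv Γ (Fml.ior φ ψ)
  | iorI2 {Γ} {φ ψ} : Deriv Γ φ → Deriv Γ (Fml.ior ψ φ)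
  | iorE {Γ} {φ ψ χ} : Deriv Γ (Fml.ior φ ψ) →
      Deriv (insert φ Γ) χ → Deriv (insert ψ Γ) χ → Deriv Γ χ
  | orIorDst {Γ} {φ ψ χ} : Deriv Γ (Fml.or φ (Fml.ior ψ χ)) →
      Deriv Γ (Fml.ior (Fml.or φ ψ) (Fml.or φ χ))
  | cfIorDst {Γ} {ψ χ} {I} : Deriv Γ (Fml.cf I (Fml.ior ψ χ)) →
      Deriv Γ (Fml.ior (Fml.cf I ψ) (Fml.cf I χ))

end CausalTeam

open CausalTeam

/-!
Induction on `φ`. Each resolution derives `φ` because `R` only chooses one disjunct of every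
`⩗`, which `⩗I` (under `∧`, `∨Sub` and `□→Sub`) puts back. Conversely, a derivation of `φ`
yields one of `⩗R(φ)` by pushing `⩗` outwards: through `∧` by `⩗E`, through `∨` by `∨⩗Dst`
and through `□→` by `□→⩗Dst`.
-/

namespace CausalTeam

theorem Res_ne_nil {V : Type} {Val : V → Type} (φ : Fml V Val) : Res φ ≠ [] := by
  induction φ <;> simp_all [Res, List.flatMap_eq_nil_iff, List.exists_mem_of_ne_nil]

variable {V : Type} [Fintype V] [DecidableEq V] [Nonempty V]
  {Val : V → Type} [∀ v, Fintype (Val v)] [∀ v, DecidableEq (Val v)] [∀ v, Nonempty (Val v)]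
  {Γ Δ : Set (Fml V Val)} {φ ψ χ : Fml V Val}

namespace Deriv

theorem mono (h : Deriv Γ φ) (hΓΔ : Γ ⊆ Δ) : Deriv Δ φ := by
  induction h generalizing Δ with
  | hyp h => exact hyp (hΓΔ h)
  | valDef X => exact valDef X
  | valUnq _ hne ih => exact valUnq (ih hΓΔ) hne
  | andI _ _ ih₁ ih₂ => exact andI (ih₁ hΓΔ) (ih₂ hΓΔ)
  | andE1 _ ih => exact andE1 (ih hΓΔ)
  | andE2 _ ih => exact andE2 (ih hΓΔ)
  | orI1 _ ih => exact orI1 (ih hΓΔ)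
  | orI2 _ ih => exact orI2 (ih hΓΔ)
  | orE hα _ _ _ ih₁ ih₂ ih₃ =>
    exact orE hα (ih₁ hΓΔ) (ih₂ (Set.insert_subset_insert hΓΔ)) (ih₃ (Set.insert_subset_insert hΓΔ))
  | negI hα _ ih => exact negI hα (ih (Set.insert_subset_insert hΓΔ))
  | negE _ _ ih₁ ih₂ => exact negE (ih₁ hΓΔ) (ih₂ hΓΔ)
  | raa hα _ ih => exact raa hα (ih (Set.insert_subset_insert hΓΔ))
  | cfEff I Y y => exact cfEff I Y y
  | cfCmp hγ _ _ ih₁ ih₂ => exact cfCmp hγ (ih₁ hΓΔ) (ih₂ hΓΔ)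
  | cfBotE _ ih => exact cfBotE (ih hΓΔ)
  | botCfE I hne => exact botCfE I hne
  | cfCtr _ ih => exact cfCtr (ih hΓΔ)
  | cfWk _ ih => exact cfWk (ih hΓΔ)
  | cfSub _ h ih => exact cfSub (ih hΓΔ) h
  | cfAndI _ _ ih₁ ih₂ => exact cfAndI (ih₁ hΓΔ) (ih₂ hΓΔ)
  | cfOrDst1 _ ih => exact cfOrDst1 (ih hΓΔ)
  | cfOrDst2 _ ih => exact cfOrDst2 (ih hΓΔ)
  | cfExtr hI _ ih => exact cfExtr hI (ih hΓΔ)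
  | cfExp hIJ _ ih => exact cfExp hIJ (ih hΓΔ)
  | negCfE _ ih => exact negCfE (ih hΓΔ)
  | recur Xs X Y hnd hX hY _ ih => exact recur Xs X Y hnd hX hY fun i hi => ih i hi hΓΔ
  | orCom _ ih => exact orCom (ih hΓΔ)
  | orAss _ ih => exact orAss (ih hΓΔ)
  | orSub _ h ih => exact orSub (ih hΓΔ) h
  | iorI1 _ ih => exact iorI1 (ih hΓΔ)
  | iorI2 _ ih => exact iorI2 (ih hΓΔ)
  | iorE _ _ _ ih₁ ih₂ ih₃ =>
    exact iorE (ih₁ hΓΔ) (ih₂ (Set.insert_subset_insert hΓΔ)) (ih₃ (Set.insert_subset_insert hΓΔ))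
  | orIorDst _ ih => exact orIorDst (ih hΓΔ)
  | cfIorDst _ ih => exact cfIorDst (ih hΓΔ)

theorem refl : Deriv {φ} φ := hyp (Set.mem_singleton φ)

theorem head : Deriv (insert φ Γ) φ := hyp (Set.mem_insert φ Γ)

theorem cut (h₁ : Deriv Γ φ) (h₂ : Deriv (insert φ Γ) ψ) : Deriv Γ ψ :=
  iorE (iorI1 (ψ := φ) h₁) h₂ h₂

theorem trans (h₁ : Deriv Γ φ) (h₂ : Deriv {φ} ψ) : Deriv Γ ψ :=
  h₁.cut (h₂.mono (Set.singleton_subset_iff.mpr (Set.mem_insert φ Γ)))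

theorem or_imp {φ' ψ' : Fml V Val} (h : Deriv Γ (Fml.or φ ψ)) (hφ : Deriv {φ} φ')
    (hψ : Deriv {ψ} ψ') : Deriv Γ (Fml.or φ' ψ') :=
  orCom (orSub (orCom (orSub h hφ)) hψ)

theorem bigIor_of_mem : ∀ {L : List (Fml V Val)}, χ ∈ L → Deriv Γ χ → Deriv Γ (bigIor L)
  | [_], hχ, h => by rwa [← List.mem_singleton.mp hχ]
  | _ :: _ :: _, hχ, h => by
    rcases List.mem_cons.mp hχ with rfl | hχ
    · exact iorI1 h
    · exact iorI2 (bigIor_of_mem hχ h)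

theorem bigIor_elim : ∀ {L : List (Fml V Val)} {Γ : Set (Fml V Val)}, L ≠ [] →
    Deriv Γ (bigIor L) → (∀ α ∈ L, Deriv (insert α Γ) χ) → Deriv Γ χ
  | [a], _, _, h, hχ => h.cut (hχ a (List.mem_singleton_self a))
  | a :: b :: L, Γ, _, h, hχ =>
    iorE h (hχ a List.mem_cons_self) <| bigIor_elim (List.cons_ne_nil b L) head fun α hα =>
      (hχ α (List.mem_cons_of_mem a hα)).mono (Set.insert_subset_insert (Set.subset_insert _ Γ))

theorem bigIor_map_of_ior_map {f : Fml V Val → Fml V Val}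
    (hf : ∀ {Γ : Set (Fml V Val)} {φ ψ : Fml V Val},
      Deriv Γ (f (Fml.ior φ ψ)) → Deriv Γ (Fml.ior (f φ) (f ψ))) :
    ∀ {L : List (Fml V Val)} {Γ : Set (Fml V Val)}, L ≠ [] →
      Deriv Γ (f (bigIor L)) → Deriv Γ (bigIor (L.map f))
  | [_], _, _, h => h
  | _ :: b :: L, _, _, h =>
    iorE (hf h) (iorI1 head) (iorI2 (bigIor_map_of_ior_map hf (List.cons_ne_nil b L) head))

theorem of_mem_Res : ∀ {φ α : Fml V Val}, α ∈ Res φ → Deriv {α} φ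
  | Fml.eq _ _, _, h | Fml.dep _ _, _, h | Fml.neg _, _, h => by
    rw [List.mem_singleton.mp h]; exact refl
  | Fml.and _ _, _, h => by
    obtain ⟨a, ha, b, hb, rfl⟩ : ∃ a ∈ Res _, ∃ b ∈ Res _, _ = Fml.and a b := by
      simpa only [Res, List.mem_flatMap, List.mem_map, eq_comm] using h
    exact andI ((andE1 refl).trans (of_mem_Res ha)) ((andE2 refl).trans (of_mem_Res hb))
  | Fml.or _ _, _, h => by
    obtain ⟨a, ha, b, hb, rfl⟩ : ∃ a ∈ Res _, ∃ b ∈ Res _, _ = Fml.or a b := by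
      simpa only [Res, List.mem_flatMap, List.mem_map, eq_comm] using h
    exact refl.or_imp (of_mem_Res ha) (of_mem_Res hb)
  | Fml.ior _ _, _, h => by
    rcases List.mem_append.mp h with h | h
    · exact iorI1 (of_mem_Res h)
    · exact iorI2 (of_mem_Res h)
  | Fml.cf _ _, _, h => by
    obtain ⟨a, ha, rfl⟩ := List.mem_map.mp h
    exact cfSub refl (of_mem_Res ha)

theorem bigIor_Res : ∀ {φ : Fml V Val} {Γ : Set (Fml V Val)}, Deriv Γ φ → Deriv Γ (bigIor (Res φ))
  | Fml.eq _ _, _, h | Fml.dep _ _, _, h | Fml.neg _, _, h => h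
  | Fml.and φ ψ, _, h => by
    refine bigIor_elim (Res_ne_nil φ) (bigIor_Res (andE1 h)) fun a ha => ?_
    refine bigIor_elim (Res_ne_nil ψ) (bigIor_Res ((andE2 h).mono (Set.subset_insert a _)))
      fun b hb => ?_
    exact bigIor_of_mem (List.mem_flatMap.mpr ⟨a, ha, List.mem_map.mpr ⟨b, hb, rfl⟩⟩)
      (andI (hyp (Set.mem_insert_of_mem b (Set.mem_insert a _))) head)
  | Fml.or φ ψ, _, h => by
    have hsplit := h.or_imp (bigIor_Res refl) (bigIor_Res refl)
    refine bigIor_elim (by simpa using Res_ne_nil ψ) (bigIor_map_of_ior_map orIorDst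
      (Res_ne_nil ψ) hsplit) fun _ hmem => ?_
    obtain ⟨b, hb, rfl⟩ := List.mem_map.mp hmem
    refine bigIor_elim (by simpa using Res_ne_nil φ) (bigIor_map_of_ior_map orIorDst
      (Res_ne_nil φ) (orCom head)) fun _ hmem => ?_
    obtain ⟨a, ha, rfl⟩ := List.mem_map.mp hmem
    exact bigIor_of_mem (List.mem_flatMap.mpr ⟨a, ha, List.mem_map.mpr ⟨b, hb, rfl⟩⟩)
      (orCom head)
  | Fml.ior φ ψ, _, h => by
    refine iorE h ?_ ?_
    · exact bigIor_elim (Res_ne_nil φ) (bigIor_Res head) fun a ha =>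
        bigIor_of_mem (List.mem_append_left _ ha) head
    · exact bigIor_elim (Res_ne_nil ψ) (bigIor_Res head) fun b hb =>
        bigIor_of_mem (List.mem_append_right _ hb) head
  | Fml.cf _ φ, _, h => bigIor_map_of_ior_map cfIorDst (Res_ne_nil φ) (cfSub h (bigIor_Res refl))

end Deriv

end CausalTeam

theorem resolution_normal_form_general {V : Type} [Fintype V] [DecidableEq V] [Nonempty V]
    {Val : V → Type} [∀ v, Fintype (Val v)] [∀ v, DecidableEq (Val v)] [∀ v, Nonempty (Val v)]
    (φ : Fml V Val) :
    Deriv ({φ} : Set (Fml V Val)) (bigIor (Res φ)) ∧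
      Deriv ({bigIor (Res φ)} : Set (Fml V Val)) φ :=
  ⟨Deriv.bigIor_Res Deriv.refl, Deriv.bigIor_elim (Res_ne_nil φ) Deriv.refl fun _ hα =>
    Deriv.head.trans (Deriv.of_mem_Res hα)⟩

/-- **Resolution normal form**: every CO⩗[σ]-formula `φ` is interderivable with the
intuitionistic disjunction of its set of resolutions in the natural deduction system
for CO⩗[σ]. -/
theorem resolution_normal_form {V : Type} [Fintype V] [DecidableEq V] [Nonempty V]
    {Val : V → Type} [∀ v, Fintype (Val v)] [∀ v, DecidableEq (Val v)] [∀ v, Nonempty (Val v)]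
    (φ : Fml V Val) (hφ : IsCOV φ) :
    Deriv ({φ} : Set (Fml V Val)) (bigIor (Res φ)) ∧
      Deriv ({bigIor (Res φ)} : Set (Fml V Val)) φ :=
  resolution_normal_form_general φ
end
end
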